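/- arXiv:2411.09210 — 2 statements merged into one kernel-verified Lean document; each statement's English description precedes it below -/
import Mathlib

section
/- Let L ⊆ {0,1}^n be a finite set containing s, let η ∈ [0, 1/2], and let E ∈ {0,1}^n have independent coordinates each equal to 1 with probability η. Set T = s ⊕ E. Then the probability that s fails to be the unique closest element of L to T satisfies Pr(∃ s' ∈ L \ {s} with d_H(T, s') ≤ d_H(T, s)) ≤ 2(|L| - 1)η. -/
open Finset

noncomputable def wB (η : ℝ) (v : ZMod 2) : ℝ := if v = 0 then 1 - η else η

lemma sum_wB (η : ℝ) : ∑ v : ZMod 2, wB η v = 1 := by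
  have : (univ : Finset (ZMod 2)) = {0, 1} := by decide
  rw [this, Finset.sum_insert (by decide), Finset.sum_singleton, wB, wB]
  norm_num

/-- The probability assigned to an error string `e` when each of the `n` bits is
flipped independently with probability `η`. -/
noncomputable def errProb (n : ℕ) (η : ℝ) (e : Fin n → ZMod 2) : ℝ :=
  η ^ (hammingNorm e) * (1 - η) ^ (n - hammingNorm e)

lemma errProb_eq_prod (n : ℕ) (η : ℝ) (e : Fin n → ZMod 2) :
    errProb n η e = ∏ i, wB η (e i) := by
  rw [← Finset.prod_filter_mul_prod_filter_not Finset.univ (fun i => e i ≠ 0)]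
  have h1 : ∏ i ∈ univ.filter (fun i => e i ≠ 0), wB η (e i)
      = ∏ _i ∈ univ.filter (fun i => e i ≠ 0), η :=
    Finset.prod_congr rfl (fun i hi => by
      simp only [mem_filter] at hi
      simp [wB, hi.2])
  have h2 : ∏ i ∈ univ.filter (fun i => ¬ e i ≠ 0), wB η (e i)
      = ∏ _i ∈ univ.filter (fun i => ¬ e i ≠ 0), (1 - η) :=
    Finset.prod_congr rfl (fun i hi => by
      simp only [mem_filter, not_not] at hi
      simp [wB, hi.2])
  rw [h1, h2, Finset.prod_const, Finset.prod_const, errProb]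
  have := Finset.card_filter_add_card_filter_not (s := (univ : Finset (Fin n)))
    (p := fun i => e i ≠ 0)
  simp only [Finset.card_univ, Fintype.card_fin] at this
  have hn : hammingNorm e = (univ.filter (fun i => e i ≠ 0)).card := rfl
  have h3 : (univ.filter (fun i => ¬ e i ≠ 0)).card = n - hammingNorm e := by omega
  rw [← hn, h3]

lemma sum_errProb (n : ℕ) (η : ℝ) : ∑ e : Fin n → ZMod 2, errProb n η e = 1 := by
  simp_rw [errProb_eq_prod]
  rw [← Fintype.piFinset_univ, ← Finset.prod_univ_sum]
  simp [sum_wB]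

lemma zmod2_ne_zero {v : ZMod 2} (h : v ≠ 0) : v = 1 := by revert v; decide

lemma sum_errProb_marg (n : ℕ) (η : ℝ) (i0 : Fin n) :
    ∑ e ∈ univ.filter (fun e : Fin n → ZMod 2 => e i0 ≠ 0), errProb n η e = η := by
  simp_rw [errProb_eq_prod]
  have hset : univ.filter (fun e : Fin n → ZMod 2 => e i0 ≠ 0)
      = Fintype.piFinset (fun j => if j = i0 then ({1} : Finset (ZMod 2)) else univ) := by
    ext e
    simp only [mem_filter, Fintype.mem_piFinset, mem_univ, true_and]
    constructor
    · intro h j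
      by_cases hj : j = i0
      · subst hj; simp [zmod2_ne_zero h]
      · simp [hj]
    · intro h
      have := h i0
      simp only [if_pos rfl, mem_singleton, eq_self_iff_true, if_true] at this
      rw [this]; decide
  rw [hset, ← Finset.prod_univ_sum]
  have : ∀ j : Fin n, ∑ v ∈ (if j = i0 then ({1} : Finset (ZMod 2)) else univ), wB η v
      = if j = i0 then η else 1 := by
    intro j
    by_cases hj : j = i0
    · simp [hj, wB]
    · simp [hj, sum_wB]
  rw [Finset.prod_congr rfl (fun j _ => this j), Finset.prod_ite_eq' univ i0 (fun _ => η)]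
  simp

lemma zmod2_add_iff : ∀ a b : ZMod 2, b ≠ 0 → (a + b ≠ 0 ↔ ¬ a ≠ 0) := by decide

lemma count_ineq (n : ℕ) (δ e : Fin n → ZMod 2)
    (h : hammingNorm (e + δ) ≤ hammingNorm e) :
    (univ.filter (fun i => δ i ≠ 0)).card
      ≤ 2 * ((univ.filter (fun i => δ i ≠ 0)).filter (fun i => e i ≠ 0)).card := by
  classical
  set D := univ.filter (fun i : Fin n => δ i ≠ 0) with hD
  set Dc := univ.filter (fun i : Fin n => ¬ δ i ≠ 0) with hDc
  have hDsplit : (D.filter (fun i => e i ≠ 0)).card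
      + (D.filter (fun i => ¬ e i ≠ 0)).card = D.card :=
    Finset.card_filter_add_card_filter_not _
  have hne : hammingNorm e = (D.filter (fun i => e i ≠ 0)).card
      + (Dc.filter (fun i => e i ≠ 0)).card := by
    have h1 : ((univ.filter (fun i : Fin n => e i ≠ 0)).filter (fun i => δ i ≠ 0)).card
        + ((univ.filter (fun i : Fin n => e i ≠ 0)).filter (fun i => ¬ δ i ≠ 0)).card
        = (univ.filter (fun i : Fin n => e i ≠ 0)).card :=
      Finset.card_filter_add_card_filter_not _
    have e1 : (univ.filter (fun i : Fin n => e i ≠ 0)).filter (fun i => δ i ≠ 0)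
        = D.filter (fun i => e i ≠ 0) := Finset.filter_comm _ _ _
    have e2 : (univ.filter (fun i : Fin n => e i ≠ 0)).filter (fun i => ¬ δ i ≠ 0)
        = Dc.filter (fun i => e i ≠ 0) := Finset.filter_comm _ _ _
    rw [e1, e2] at h1
    exact h1.symm
  have hne2 : hammingNorm (e + δ) = (D.filter (fun i => ¬ e i ≠ 0)).card
      + (Dc.filter (fun i => e i ≠ 0)).card := by
    have h1 : ((univ.filter (fun i : Fin n => (e + δ) i ≠ 0)).filter (fun i => δ i ≠ 0)).card
        + ((univ.filter (fun i : Fin n => (e + δ) i ≠ 0)).filter (fun i => ¬ δ i ≠ 0)).card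
        = (univ.filter (fun i : Fin n => (e + δ) i ≠ 0)).card :=
      Finset.card_filter_add_card_filter_not _
    have e1 : (univ.filter (fun i : Fin n => (e + δ) i ≠ 0)).filter (fun i => δ i ≠ 0)
        = D.filter (fun i => ¬ e i ≠ 0) := by
      rw [Finset.filter_comm]
      apply Finset.filter_congr
      intro i hi
      simp only [hD, mem_filter, mem_univ, true_and] at hi
      simpa using zmod2_add_iff (e i) (δ i) hi
    have e2 : (univ.filter (fun i : Fin n => (e + δ) i ≠ 0)).filter (fun i => ¬ δ i ≠ 0)
        = Dc.filter (fun i => e i ≠ 0) := by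
      rw [Finset.filter_comm]
      apply Finset.filter_congr
      intro i hi
      simp only [hDc, mem_filter, mem_univ, true_and, not_not] at hi
      simp [Pi.add_apply, hi]
    rw [e1, e2] at h1
    exact h1.symm
  rw [hne, hne2] at h
  omega

lemma errProb_nonneg (n : ℕ) {η : ℝ} (hη0 : 0 ≤ η) (hη1 : η ≤ 1) (e : Fin n → ZMod 2) :
    0 ≤ errProb n η e := by
  unfold errProb
  have : (0:ℝ) ≤ 1 - η := by linarith
  positivity

lemma pair_bound (n : ℕ) {η : ℝ} (hη0 : 0 ≤ η) (hη1 : η ≤ 1)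
    (δ : Fin n → ZMod 2) (hδ : δ ≠ 0) :
    ∑ e ∈ univ.filter (fun e : Fin n → ZMod 2 => hammingNorm (e + δ) ≤ hammingNorm e),
      errProb n η e ≤ 2 * η := by
  classical
  set D := univ.filter (fun i : Fin n => δ i ≠ 0) with hD
  have hd : 0 < D.card := by
    rw [Finset.card_pos]
    obtain ⟨i, hi⟩ := Function.ne_iff.mp hδ
    refine ⟨i, ?_⟩
    simp only [hD, mem_filter, mem_univ, true_and]
    simpa using hi
  have key : (D.card : ℝ) * (∑ e ∈ univ.filter (fun e : Fin n → ZMod 2 =>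
      hammingNorm (e + δ) ≤ hammingNorm e), errProb n η e) ≤ (D.card : ℝ) * (2 * η) := by
    rw [Finset.mul_sum]
    have step1 : ∑ e ∈ univ.filter (fun e : Fin n → ZMod 2 =>
        hammingNorm (e + δ) ≤ hammingNorm e), (D.card : ℝ) * errProb n η e
        ≤ ∑ e ∈ univ.filter (fun e : Fin n → ZMod 2 =>
        hammingNorm (e + δ) ≤ hammingNorm e),
          (2 * ((D.filter (fun i => e i ≠ 0)).card : ℝ)) * errProb n η e := by
      apply Finset.sum_le_sum
      intro e he
      simp only [mem_filter, mem_univ, true_and] at he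
      have hc := count_ineq n δ e he
      have : (D.card : ℝ) ≤ 2 * ((D.filter (fun i => e i ≠ 0)).card : ℝ) := by
        exact_mod_cast hc
      exact mul_le_mul_of_nonneg_right this (errProb_nonneg n hη0 hη1 e)
    have step2 : ∑ e ∈ univ.filter (fun e : Fin n → ZMod 2 =>
        hammingNorm (e + δ) ≤ hammingNorm e),
          (2 * ((D.filter (fun i => e i ≠ 0)).card : ℝ)) * errProb n η e
        ≤ ∑ e : Fin n → ZMod 2,
          (2 * ((D.filter (fun i => e i ≠ 0)).card : ℝ)) * errProb n η e := by
      apply Finset.sum_le_sum_of_subset_of_nonneg (Finset.filter_subset _ _)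
      intro e _ _
      have := errProb_nonneg n hη0 hη1 e
      positivity
    have step3 : ∑ e : Fin n → ZMod 2,
        (2 * ((D.filter (fun i => e i ≠ 0)).card : ℝ)) * errProb n η e
        = (D.card : ℝ) * (2 * η) := by
      have hcard : ∀ e : Fin n → ZMod 2, ((D.filter (fun i => e i ≠ 0)).card : ℝ)
          = ∑ i ∈ D, (if e i ≠ 0 then (1:ℝ) else 0) := by
        intro e
        rw [Finset.card_filter]
        push_cast
        rfl
      calc ∑ e : Fin n → ZMod 2, (2 * ((D.filter (fun i => e i ≠ 0)).card : ℝ)) * errProb n η e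
          = 2 * ∑ e : Fin n → ZMod 2,
              ∑ i ∈ D, (if e i ≠ 0 then (1:ℝ) else 0) * errProb n η e := by
            rw [Finset.mul_sum]
            apply Finset.sum_congr rfl
            intro e _
            rw [hcard e, mul_assoc, Finset.sum_mul]
        _ = 2 * ∑ i ∈ D, ∑ e : Fin n → ZMod 2,
              (if e i ≠ 0 then (1:ℝ) else 0) * errProb n η e := by
            rw [Finset.sum_comm]
        _ = 2 * ∑ i ∈ D, η := by
            congr 1
            apply Finset.sum_congr rfl
            intro i _
            have hm := sum_errProb_marg n η i
            rw [Finset.sum_filter] at hm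
            refine Eq.trans ?_ hm
            apply Finset.sum_congr rfl
            intro e _
            by_cases h : e i ≠ 0 <;> simp [h]
        _ = (D.card : ℝ) * (2 * η) := by
            rw [Finset.sum_const, nsmul_eq_mul]
            ring
    calc _ ≤ _ := step1
      _ ≤ _ := step2
      _ = _ := step3
  have hdpos : (0:ℝ) < (D.card : ℝ) := by exact_mod_cast hd
  exact le_of_mul_le_mul_left key hdpos

lemma sum_biUnion_le' {α β : Type*} [DecidableEq β] (f : β → ℝ) (hf : ∀ b, 0 ≤ f b)
    (s : Finset α) (t : α → Finset β) :
    ∑ b ∈ s.biUnion t, f b ≤ ∑ a ∈ s, ∑ b ∈ t a, f b := by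
  classical
  induction s using Finset.induction_on with
  | empty => simp
  | @insert a s ha ih =>
    rw [Finset.biUnion_insert, Finset.sum_insert ha]
    have h1 : ∑ b ∈ t a ∪ s.biUnion t, f b ≤ ∑ b ∈ t a, f b + ∑ b ∈ s.biUnion t, f b := by
      have := Finset.sum_union_inter (s₁ := t a) (s₂ := s.biUnion t) (f := f)
      have h2 : 0 ≤ ∑ b ∈ t a ∩ s.biUnion t, f b := Finset.sum_nonneg fun b _ => hf b
      linarith
    linarith

/-- For `s ∈ L` and `T = s ⊕ E` with `E` having independent Bernoulli(η)
coordinates (`η ≤ 1/2`), the probability that `s` fails to be the unique closest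
element of `L` to `T` is at most `2(|L| - 1)η`. -/
theorem mismatch_union_bound (n : ℕ) (L : Finset (Fin n → ZMod 2))
    (s : Fin n → ZMod 2) (hs : s ∈ L) (η : ℝ) (hη : η ∈ Set.Icc (0 : ℝ) (1 / 2)) :
    ∑ e ∈ univ.filter (fun e : Fin n → ZMod 2 =>
        ∃ s' ∈ L, s' ≠ s ∧ hammingDist (s + e) s' ≤ hammingDist (s + e) s),
      errProb n η e ≤ 2 * ((L.card : ℝ) - 1) * η := by
  classical
  obtain ⟨hη0, hη12⟩ := hη
  have hη1 : η ≤ 1 := le_trans hη12 (by norm_num)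
  have hsub : univ.filter (fun e : Fin n → ZMod 2 =>
        ∃ s' ∈ L, s' ≠ s ∧ hammingDist (s + e) s' ≤ hammingDist (s + e) s)
      ⊆ (L.erase s).biUnion (fun s' => univ.filter
        (fun e : Fin n → ZMod 2 => hammingNorm (e + (s - s')) ≤ hammingNorm e)) := by
    intro e he
    simp only [mem_filter, mem_univ, true_and] at he
    obtain ⟨s', hs'L, hne, hle⟩ := he
    rw [Finset.mem_biUnion]
    refine ⟨s', Finset.mem_erase.mpr ⟨hne, hs'L⟩, ?_⟩
    simp only [mem_filter, mem_univ, true_and]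
    rw [hammingDist_eq_hammingNorm, hammingDist_eq_hammingNorm] at hle
    have e1 : -(s + e) + s' = e + (s - s') := by
      funext i
      simp only [Pi.add_apply, Pi.neg_apply, Pi.sub_apply]
      generalize s i = a
      generalize e i = b
      generalize s' i = c
      revert a b c; decide
    have e2 : -(s + e) + s = e := by
      funext i
      simp only [Pi.add_apply, Pi.neg_apply]
      generalize s i = a
      generalize e i = b
      revert a b; decide
    rwa [e1, e2] at hle
  have hL1 : 1 ≤ L.card := Finset.card_pos.mpr ⟨s, hs⟩
  calc ∑ e ∈ univ.filter (fun e : Fin n → ZMod 2 =>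
        ∃ s' ∈ L, s' ≠ s ∧ hammingDist (s + e) s' ≤ hammingDist (s + e) s), errProb n η e
      ≤ ∑ e ∈ (L.erase s).biUnion (fun s' => univ.filter
        (fun e : Fin n → ZMod 2 => hammingNorm (e + (s - s')) ≤ hammingNorm e)),
          errProb n η e :=
        Finset.sum_le_sum_of_subset_of_nonneg hsub
          (fun e _ _ => errProb_nonneg n hη0 hη1 e)
    _ ≤ ∑ s' ∈ L.erase s, ∑ e ∈ univ.filter
        (fun e : Fin n → ZMod 2 => hammingNorm (e + (s - s')) ≤ hammingNorm e),
          errProb n η e :=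
        sum_biUnion_le' _ (errProb_nonneg n hη0 hη1) _ _
    _ ≤ ∑ _s' ∈ L.erase s, 2 * η := by
        apply Finset.sum_le_sum
        intro s' hs'
        exact pair_bound n hη0 hη1 (s - s')
          (sub_ne_zero.mpr (Finset.mem_erase.mp hs').1.symm)
    _ = 2 * ((L.card : ℝ) - 1) * η := by
        rw [Finset.sum_const, Finset.card_erase_of_mem hs, nsmul_eq_mul]
        rw [Nat.cast_sub hL1]
        push_cast
        ring
end

section
/- (Soundness of the verification test.) Let f : {0,1}^n → {0,1} be τ-granular for some τ ∈ (0,1], meaning that for every s ∈ {0,1}^n either ĝ(s) = 0 or |ĝ(s)| ≥ τ, where g(x) = (-1)^{f(x)}. Let L ⊆ {0,1}^n with |L| ≤ 2/τ² fail to contain the full support of ĝ, i.e. there exists s* ∉ L with ĝ(s*) ≠ 0, and let g̃ : L → ℝ satisfy |g̃(s) - ĝ(s)| ≤ τ³/8 for all s ∈ L. Then Σ_{s ∈ L} ĝ(s)² ≤ 1 - τ² and the test statistic satisfies S̃ = Σ_{s ∈ L} g̃(s)² ≤ 1 - τ²/2. -/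
open Finset

/-- The mod-2 inner product `s·x = Σᵢ sᵢxᵢ mod 2`. -/
def dotp {n : ℕ} (s x : Fin n → ZMod 2) : ZMod 2 := ∑ i, s i * x i

/-- The Fourier coefficient `ĝ(s) = 2⁻ⁿ Σₓ (-1)^{f(x)} (-1)^{s·x}` of `g = (-1)^f`. -/
noncomputable def hatg {n : ℕ} (f : (Fin n → ZMod 2) → ZMod 2)
    (s : Fin n → ZMod 2) : ℝ :=
  (1 / 2 ^ n) * ∑ x, (-1 : ℝ) ^ (f x).val * (-1 : ℝ) ^ (dotp s x).val

noncomputable def chi2 (a : ZMod 2) : ℝ := (-1 : ℝ) ^ a.val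

lemma zmod2_cases (a : ZMod 2) : a = 0 ∨ a = 1 := by revert a; decide

lemma chi2_add (a b : ZMod 2) : chi2 (a + b) = chi2 a * chi2 b := by
  rcases zmod2_cases a with rfl | rfl <;> rcases zmod2_cases b with rfl | rfl <;>
    norm_num [chi2, show ((1:ZMod 2)+1) = 0 from rfl, show ZMod.val (2:ZMod 2) = 0 from rfl, show ZMod.val (0:ZMod 2) = 0 from rfl,
      show ZMod.val (1:ZMod 2) = 1 from rfl]

lemma chi2_sq (a : ZMod 2) : chi2 a * chi2 a = 1 := by
  rcases zmod2_cases a with rfl | rfl <;>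
    norm_num [chi2, show ZMod.val (0:ZMod 2) = 0 from rfl, show ZMod.val (1:ZMod 2) = 1 from rfl]

lemma chi2_sum {ι : Type*} (s : Finset ι) (g : ι → ZMod 2) :
    chi2 (∑ i ∈ s, g i) = ∏ i ∈ s, chi2 (g i) := by
  classical
  induction s using Finset.induction_on with
  | empty => simp [chi2]
  | insert _ _ h ih => rw [Finset.sum_insert h, Finset.prod_insert h, chi2_add, ih]

lemma sum_zmod2 (F : ZMod 2 → ℝ) : ∑ a : ZMod 2, F a = F 0 + F 1 := by
  rw [show (univ : Finset (ZMod 2)) = {0, 1} by decide]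
  simp

lemma orth (n : ℕ) (z : Fin n → ZMod 2) :
    ∑ s : Fin n → ZMod 2, chi2 (dotp s z) = if z = 0 then (2:ℝ)^n else 0 := by
  have h1 : ∑ s : Fin n → ZMod 2, chi2 (dotp s z)
      = ∑ s : Fin n → ZMod 2, ∏ i, chi2 (s i * z i) := by
    refine Finset.sum_congr rfl fun s _ => ?_
    exact chi2_sum _ _
  rw [h1, ← Fintype.prod_sum (fun i a => chi2 (a * z i))]
  have h2 : ∀ i, ∑ a : ZMod 2, chi2 (a * z i) = if z i = 0 then (2:ℝ) else 0 := by
    intro i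
    rw [sum_zmod2]
    rcases zmod2_cases (z i) with h | h <;>
      simp [h, chi2, show ZMod.val (0:ZMod 2) = 0 from rfl, show ZMod.val (1:ZMod 2) = 1 from rfl] <;>
      norm_num
  simp_rw [h2]
  by_cases hz : z = 0
  · subst hz; simp
  · rw [if_neg hz]
    obtain ⟨i, hi⟩ : ∃ i, z i ≠ 0 := by
      by_contra h; push_neg at h; exact hz (funext h)
    exact Finset.prod_eq_zero (mem_univ i) (by simp [hi])

lemma dotp_add {n : ℕ} (s x y : Fin n → ZMod 2) :
    dotp s (x + y) = dotp s x + dotp s y := by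
  simp [dotp, mul_add, Finset.sum_add_distrib]

lemma hatg_eq {n : ℕ} (f : (Fin n → ZMod 2) → ZMod 2) (s : Fin n → ZMod 2) :
    hatg f s = (1/2^n : ℝ) * ∑ x, chi2 (f x) * chi2 (dotp s x) := rfl

lemma add_self_eq_zero' {n : ℕ} (x y : Fin n → ZMod 2) : (x + y = 0) ↔ y = x := by
  constructor
  · intro h; funext i
    have h2 : ∀ a b : ZMod 2, a + b = 0 → b = a := by decide
    exact h2 _ _ (congrFun h i)
  · rintro rfl; funext i
    have h2 : ∀ a : ZMod 2, a + a = 0 := by decide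
    exact h2 _

lemma parseval (n : ℕ) (f : (Fin n → ZMod 2) → ZMod 2) :
    ∑ s : Fin n → ZMod 2, (hatg f s)^2 = 1 := by
  have key : ∀ s : Fin n → ZMod 2, (hatg f s)^2
      = (1/2^n : ℝ)^2 * ∑ x, ∑ y, (chi2 (f x) * chi2 (f y)) * chi2 (dotp s (x+y)) := by
    intro s
    rw [hatg_eq, mul_pow]
    congr 1
    rw [sq, Finset.sum_mul_sum]
    refine Finset.sum_congr rfl fun x _ => Finset.sum_congr rfl fun y _ => ?_
    rw [dotp_add, chi2_add]; ring
  simp_rw [key]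
  rw [← Finset.mul_sum, Finset.sum_comm]
  have hx : ∀ x : Fin n → ZMod 2,
      (∑ s : Fin n → ZMod 2, ∑ y, (chi2 (f x) * chi2 (f y)) * chi2 (dotp s (x+y)))
      = (2:ℝ)^n := by
    intro x
    rw [Finset.sum_comm]
    have : ∀ y : Fin n → ZMod 2,
        (∑ s : Fin n → ZMod 2, (chi2 (f x) * chi2 (f y)) * chi2 (dotp s (x+y)))
        = if y = x then (chi2 (f x) * chi2 (f y)) * (2:ℝ)^n else 0 := by
      intro y
      rw [← Finset.mul_sum, orth]
      by_cases h : y = x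
      · rw [if_pos ((add_self_eq_zero' x y).mpr h), if_pos h]
      · have hne : x + y ≠ 0 := fun hc => h ((add_self_eq_zero' x y).mp hc)
        rw [if_neg hne, if_neg h, mul_zero]
    simp_rw [this]
    rw [Finset.sum_ite_eq' univ x (fun y => (chi2 (f x) * chi2 (f y)) * (2:ℝ)^n)]
    simp [chi2_sq]
  simp_rw [hx]
  rw [Finset.sum_const]
  have hcard : (Fintype.card (Fin n → ZMod 2) : ℝ) = 2^n := by
    simp [Fintype.card_fun]
  rw [Finset.card_univ]
  push_cast [hcard]
  have h2 : (2:ℝ)^n ≠ 0 := by positivity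
  field_simp
  rw [nsmul_eq_mul, hcard]; ring

/-- Soundness of the verification test: if `f` is `τ`-granular, `L` (with
`|L| ≤ 2/τ²`) misses some element of the support of `ĝ`, and `g̃` is
`τ³/8`-accurate on `L`, then `Σ_{s∈L} ĝ(s)² ≤ 1 - τ²` and the test statistic
`S̃ = Σ_{s∈L} g̃(s)²` is at most `1 - τ²/2`. -/
theorem verification_test_sound (n : ℕ) (hn : 0 < n)
    (f : (Fin n → ZMod 2) → ZMod 2) (τ : ℝ) (hτ : τ ∈ Set.Ioc (0 : ℝ) 1)
    (hgran : ∀ s, hatg f s = 0 ∨ τ ≤ |hatg f s|)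
    (L : Finset (Fin n → ZMod 2)) (hLcard : (L.card : ℝ) ≤ 2 / τ ^ 2)
    (hLmiss : ∃ sstar ∉ L, hatg f sstar ≠ 0)
    (gtil : (Fin n → ZMod 2) → ℝ)
    (hgtil : ∀ s ∈ L, |gtil s - hatg f s| ≤ τ ^ 3 / 8) :
    (∑ s ∈ L, (hatg f s) ^ 2 ≤ 1 - τ ^ 2) ∧ ∑ s ∈ L, (gtil s) ^ 2 ≤ 1 - τ ^ 2 / 2 := by
  obtain ⟨hτ0, hτ1⟩ := hτ
  obtain ⟨sstar, hsL, hs0⟩ := hLmiss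
  have hττ : τ ^ 2 ≤ hatg f sstar ^ 2 := by
    rcases hgran sstar with h | h
    · exact absurd h hs0
    · calc τ ^ 2 ≤ |hatg f sstar| ^ 2 := pow_le_pow_left₀ hτ0.le h 2
        _ = hatg f sstar ^ 2 := sq_abs _
  have hP := parseval n f
  have hsplit : ∑ s ∈ univ \ L, hatg f s ^ 2 + ∑ s ∈ L, hatg f s ^ 2 = 1 := by
    rw [Finset.sum_sdiff (Finset.subset_univ L)]; exact hP
  have hone : hatg f sstar ^ 2 ≤ ∑ s ∈ univ \ L, hatg f s ^ 2 :=
    Finset.single_le_sum (f := fun s => hatg f s ^ 2) (fun i _ => sq_nonneg _)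
      (Finset.mem_sdiff.mpr ⟨Finset.mem_univ _, hsL⟩)
  have hfirst : ∑ s ∈ L, hatg f s ^ 2 ≤ 1 - τ ^ 2 := by linarith
  refine ⟨hfirst, ?_⟩
  -- Cauchy-Schwarz
  set A : ℝ := ∑ s ∈ L, |hatg f s| with hA
  have hA0 : 0 ≤ A := Finset.sum_nonneg fun s _ => abs_nonneg _
  have hCS : A ^ 2 ≤ (L.card : ℝ) * ∑ s ∈ L, hatg f s ^ 2 := by
    have := Finset.sum_mul_sq_le_sq_mul_sq L (fun _ => (1:ℝ)) (fun s => |hatg f s|)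
    simpa [hA, sq_abs] using this
  have hsum0 : (0:ℝ) ≤ ∑ s ∈ L, hatg f s ^ 2 := Finset.sum_nonneg fun s _ => sq_nonneg _
  have hcardτ : (L.card : ℝ) * τ ^ 2 ≤ 2 := (le_div_iff₀ (pow_pos hτ0 2)).mp hLcard
  have h1 : A ^ 2 ≤ (L.card : ℝ) := by nlinarith [(Nat.cast_nonneg L.card : (0:ℝ) ≤ (L.card:ℝ))]
  have hA2 : A ^ 2 * τ ^ 2 ≤ 2 := by nlinarith [sq_nonneg τ]
  have hAτ : A * τ ≤ 17 / 12 := by nlinarith [sq_nonneg (A * τ - 3/2), mul_nonneg hA0 hτ0.le]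
  have hpt : ∀ s ∈ L, gtil s ^ 2 ≤ hatg f s ^ 2 + (τ^3/4) * |hatg f s| + (τ^3/8)^2 := by
    intro s hs
    have hd := hgtil s hs
    have habs : |gtil s| ≤ |hatg f s| + τ ^ 3 / 8 := by
      calc |gtil s| = |hatg f s + (gtil s - hatg f s)| := by ring_nf
        _ ≤ |hatg f s| + |gtil s - hatg f s| := abs_add_le _ _
        _ ≤ _ := by linarith
    calc gtil s ^ 2 = |gtil s| ^ 2 := (sq_abs _).symm
      _ ≤ (|hatg f s| + τ ^ 3 / 8) ^ 2 :=
        pow_le_pow_left₀ (abs_nonneg _) habs 2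
      _ = hatg f s ^ 2 + (τ^3/4) * |hatg f s| + (τ^3/8)^2 := by
        rw [add_sq, sq_abs]; ring
  have hsum : ∑ s ∈ L, gtil s ^ 2
      ≤ (∑ s ∈ L, hatg f s ^ 2) + (τ^3/4) * A + (L.card : ℝ) * (τ^3/8)^2 := by
    calc ∑ s ∈ L, gtil s ^ 2
        ≤ ∑ s ∈ L, (hatg f s ^ 2 + (τ^3/4) * |hatg f s| + (τ^3/8)^2) :=
          Finset.sum_le_sum hpt
      _ = (∑ s ∈ L, hatg f s ^ 2) + (τ^3/4) * A + (L.card : ℝ) * (τ^3/8)^2 := by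
          rw [Finset.sum_add_distrib, Finset.sum_add_distrib, Finset.sum_const,
            nsmul_eq_mul, hA, ← Finset.mul_sum]
  have h5 : (τ^3/4) * A ≤ (17/48) * τ^2 := by
    nlinarith [mul_le_mul_of_nonneg_right hAτ (sq_nonneg τ)]
  have hτ4 : τ ^ 4 ≤ τ ^ 2 := by nlinarith [sq_nonneg τ]
  have h6 : (L.card : ℝ) * (τ^3/8)^2 ≤ τ^2/32 := by
    nlinarith [mul_le_mul_of_nonneg_right hcardτ (by positivity : (0:ℝ) ≤ τ^4/64)]
  linarith [pow_pos hτ0 2]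
end
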